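/- In the transvection group example, the Gerstenhaber square bracket of the 2-cocycle λ with itself vanishes at the cochain level: [λ, λ] = λ ∘_X λ − λ ∘_X λ computed via the twisted product resolution is 0; in particular λ ∘_X λ = 0 on X₃. -/

import Mathlib

open scoped TensorProduct
open MulOpposite

noncomputable section

universe u

variable (p : ℕ) [Fact p.Prime] (k : Type u) [Field k] [CharP k p]

/-- The submodule of middle-linearity relations defining the tensor product over `R`
of a right `R`-module `M` and a left `R`-module `N`. -/
def midRel (R : Type u) [Ring R] (M N : Type u)
    [AddCommGroup M] [Module k M] [Module Rᵐᵒᵖ M]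
    [AddCommGroup N] [Module k N] [Module R N] : Submodule k (M ⊗[k] N) :=
  Submodule.span k
    {z | ∃ (r : R) (m : M) (n : N), z = (op r • m) ⊗ₜ[k] n - m ⊗ₜ[k] (r • n)}

/-- The tensor product `M ⊗_R N` over `R`, as a quotient of `M ⊗[k] N`. -/
abbrev OverR (R : Type u) [Ring R] (M N : Type u)
    [AddCommGroup M] [Module k M] [Module Rᵐᵒᵖ M]
    [AddCommGroup N] [Module k N] [Module R N] : Type u :=
  (M ⊗[k] N) ⧸ midRel k R M N

/-- The image of a pure tensor in `M ⊗_R N`. -/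
abbrev omk (R : Type u) [Ring R] {M N : Type u}
    [AddCommGroup M] [Module k M] [Module Rᵐᵒᵖ M]
    [AddCommGroup N] [Module k N] [Module R N] (m : M) (n : N) :
    OverR k R M N :=
  Submodule.Quotient.mk (m ⊗ₜ[k] n)

/-- The middle-linearity relations for the triple tensor product `M ⊗_R M ⊗_R M`. -/
def midRel3 (R : Type u) [Ring R] (M : Type u)
    [AddCommGroup M] [Module k M] [Module R M] [Module Rᵐᵒᵖ M] :
    Submodule k (M ⊗[k] (M ⊗[k] M)) :=
  Submodule.span k
    ({z | ∃ (r : R) (m n q : M),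
        z = (op r • m) ⊗ₜ[k] (n ⊗ₜ[k] q) - m ⊗ₜ[k] ((r • n) ⊗ₜ[k] q)} ∪
     {z | ∃ (r : R) (m n q : M),
        z = m ⊗ₜ[k] ((op r • n) ⊗ₜ[k] q) - m ⊗ₜ[k] (n ⊗ₜ[k] (r • q))})

/-- The triple tensor product `M ⊗_R M ⊗_R M` over `R`. -/
abbrev Over3 (R : Type u) [Ring R] (M : Type u)
    [AddCommGroup M] [Module k M] [Module R M] [Module Rᵐᵒᵖ M] : Type u :=
  (M ⊗[k] (M ⊗[k] M)) ⧸ midRel3 k R M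

/-- The image of a pure tensor in `M ⊗_R M ⊗_R M`. -/
abbrev omk3 (R : Type u) [Ring R] {M : Type u}
    [AddCommGroup M] [Module k M] [Module R M] [Module Rᵐᵒᵖ M] (m n q : M) :
    Over3 k R M :=
  Submodule.Quotient.mk (m ⊗ₜ[k] (n ⊗ₜ[k] q))

/-- The cyclic group `G = ℤ/pℤ`, written multiplicatively, generated by the
transvection `g = (1 1 / 0 1)` acting on `V = k²`. -/
abbrev Gp : Type := Multiplicative (ZMod p)

/-- The generator `g` of `G ≅ ℤ/pℤ`. -/
def gg : Gp p := Multiplicative.ofAdd (1 : ZMod p)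

/-- `S = S(V) ≅ k[v,w]`, the symmetric algebra on `V = k²`. -/
abbrev SV : Type u := MvPolynomial (Fin 2) k

/-- The basis vector `v` of `V`, as an element of `S(V)`. -/
def vv : SV k := MvPolynomial.X 0

/-- The basis vector `w` of `V`, as an element of `S(V)`. -/
def ww : SV k := MvPolynomial.X 1

variable [MulSemiringAction (Gp p) (SV k)] [SMulCommClass (Gp p) k (SV k)]

variable (C : Type u) [AddCommGroup C] [Module k C]
  [Module (MonoidAlgebra k (Gp p)) C] [Module (MonoidAlgebra k (Gp p))ᵐᵒᵖ C]
  [IsScalarTower k (MonoidAlgebra k (Gp p)) C]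
  [IsScalarTower k (MonoidAlgebra k (Gp p))ᵐᵒᵖ C]
  [SMulCommClass (MonoidAlgebra k (Gp p)) (MonoidAlgebra k (Gp p))ᵐᵒᵖ C]
  [SMulCommClass (MonoidAlgebra k (Gp p)) k C]
  [SMulCommClass (MonoidAlgebra k (Gp p))ᵐᵒᵖ k C]

/-- The reduced bar resolution `C` of `kG`, `C_n = kG ⊗ (kG/k·1)^{⊗n} ⊗ kG`, presented by
its spanning generators: `gen n a` records `a 0 ⊗ (a 1)⁻ ⊗ ⋯ ⊗ (a n)⁻ ⊗ a (n+1)` for group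
elements `a t` (only the entries `a 0, …, a (n+1)` are relevant, and a generator vanishes
whenever one of its middle entries equals `1`).  The sign operator `ε_C` is included. -/
structure RedBarC : Type u where
  gr : ℕ → Submodule k C
  internal : DirectSum.IsInternal gr
  gen : ℕ → (ℕ → Gp p) → C
  gen_gr : ∀ (n : ℕ) (a : ℕ → Gp p), gen n a ∈ gr n
  gen_span : ∀ n : ℕ, gr n ≤ Submodule.span k {x | ∃ a : ℕ → Gp p, x = gen n a}
  gen_congr : ∀ (n : ℕ) (a b : ℕ → Gp p), (∀ t ≤ n + 1, a t = b t) → gen n a = gen n b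
  reduced : ∀ (n : ℕ) (a : ℕ → Gp p) (t : ℕ), 1 ≤ t → t ≤ n → a t = 1 → gen n a = 0
  smul_gen : ∀ (g₀ : Gp p) (n : ℕ) (a : ℕ → Gp p),
    (MonoidAlgebra.single g₀ (1 : k)) • gen n a =
      gen n (Function.update a 0 (g₀ * a 0))
  smul_op_gen : ∀ (g₁ : Gp p) (n : ℕ) (a : ℕ → Gp p),
    (op (MonoidAlgebra.single g₁ (1 : k))) • gen n a =
      gen n (Function.update a (n + 1) (a (n + 1) * g₁))
  d : C →ₗ[k] C
  d_gen : ∀ (n : ℕ) (a : ℕ → Gp p),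
    d (gen (n + 1) a) = ∑ i ∈ Finset.range (n + 2), (-1 : k) ^ i •
      gen n (fun t => if t < i then a t else if t = i then a i * a (i + 1) else a (t + 1))
  d_zero : ∀ a : ℕ → Gp p, d (gen 0 a) = 0
  aug : C →ₗ[k] MonoidAlgebra k (Gp p)
  aug_gen : ∀ a : ℕ → Gp p, aug (gen 0 a) = MonoidAlgebra.single (a 0 * a 1) (1 : k)
  aug_gr : ∀ (n : ℕ) (x : C), x ∈ gr (n + 1) → aug x = 0
  eps : C →ₗ[k] C
  eps_gen : ∀ (n : ℕ) (a : ℕ → Gp p), eps (gen n a) = (-1 : k) ^ n • gen n a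

variable (D : Type u) [AddCommGroup D] [Module k D]
  [Module (SV k) D] [Module (SV k)ᵐᵒᵖ D]
  [IsScalarTower k (SV k) D] [IsScalarTower k (SV k)ᵐᵒᵖ D]
  [SMulCommClass (SV k) (SV k)ᵐᵒᵖ D] [SMulCommClass (SV k) k D]
  [SMulCommClass (SV k)ᵐᵒᵖ k D]
  [DistribMulAction (Gp p) D] [SMulCommClass (Gp p) k D]

/-- The Koszul resolution `D` of `S = S(V)`, `D_j = S ⊗ Λ^j V ⊗ S` for `V = k²`,
presented by its generators: `gen0 s s' = s ⊗ s'`, `gen1v s s' = s ⊗ v ⊗ s'`,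
`gen1w s s' = s ⊗ w ⊗ s'` and `gen2 s s' = s ⊗ v∧w ⊗ s'`, with the Koszul differential,
augmentation given by multiplication, the evident `S`-bimodule structure, and the
`G`-action induced by `ᵍv = v`, `ᵍw = v + w`. -/
structure KoszulD : Type u where
  gr : ℕ → Submodule k D
  internal : DirectSum.IsInternal gr
  gr_top : ∀ n : ℕ, gr (n + 3) = ⊥
  gen0 : SV k →ₗ[k] SV k →ₗ[k] D
  gen1v : SV k →ₗ[k] SV k →ₗ[k] D
  gen1w : SV k →ₗ[k] SV k →ₗ[k] D
  gen2 : SV k →ₗ[k] SV k →ₗ[k] D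
  gen0_gr : ∀ s s' : SV k, gen0 s s' ∈ gr 0
  gen1v_gr : ∀ s s' : SV k, gen1v s s' ∈ gr 1
  gen1w_gr : ∀ s s' : SV k, gen1w s s' ∈ gr 1
  gen2_gr : ∀ s s' : SV k, gen2 s s' ∈ gr 2
  span0 : gr 0 ≤ Submodule.span k {x | ∃ s s' : SV k, x = gen0 s s'}
  span1 : gr 1 ≤ Submodule.span k
    {x | (∃ s s' : SV k, x = gen1v s s') ∨ (∃ s s' : SV k, x = gen1w s s')}
  span2 : gr 2 ≤ Submodule.span k {x | ∃ s s' : SV k, x = gen2 s s'}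
  smul_gen0 : ∀ s₀ s s' : SV k, s₀ • gen0 s s' = gen0 (s₀ * s) s'
  smul_gen1v : ∀ s₀ s s' : SV k, s₀ • gen1v s s' = gen1v (s₀ * s) s'
  smul_gen1w : ∀ s₀ s s' : SV k, s₀ • gen1w s s' = gen1w (s₀ * s) s'
  smul_gen2 : ∀ s₀ s s' : SV k, s₀ • gen2 s s' = gen2 (s₀ * s) s'
  smul_op_gen0 : ∀ s₁ s s' : SV k, op s₁ • gen0 s s' = gen0 s (s' * s₁)
  smul_op_gen1v : ∀ s₁ s s' : SV k, op s₁ • gen1v s s' = gen1v s (s' * s₁)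
  smul_op_gen1w : ∀ s₁ s s' : SV k, op s₁ • gen1w s s' = gen1w s (s' * s₁)
  smul_op_gen2 : ∀ s₁ s s' : SV k, op s₁ • gen2 s s' = gen2 s (s' * s₁)
  gact_gen0 : ∀ s s' : SV k,
    gg p • gen0 s s' = gen0 (gg p • s) (gg p • s')
  gact_gen1v : ∀ s s' : SV k,
    gg p • gen1v s s' = gen1v (gg p • s) (gg p • s')
  gact_gen1w : ∀ s s' : SV k,
    gg p • gen1w s s' = gen1v (gg p • s) (gg p • s') + gen1w (gg p • s) (gg p • s')
  gact_gen2 : ∀ s s' : SV k,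
    gg p • gen2 s s' = gen2 (gg p • s) (gg p • s')
  d : D →ₗ[k] D
  d_gen0 : ∀ s s' : SV k, d (gen0 s s') = 0
  d_gen1v : ∀ s s' : SV k, d (gen1v s s') = gen0 (s * vv k) s' - gen0 s (vv k * s')
  d_gen1w : ∀ s s' : SV k, d (gen1w s s') = gen0 (s * ww k) s' - gen0 s (ww k * s')
  d_gen2 : ∀ s s' : SV k, d (gen2 s s') =
    gen1w (s * vv k) s' - gen1w s (vv k * s') - gen1v (s * ww k) s' + gen1v s (ww k * s')
  aug : D →ₗ[k] SV k
  aug_gen0 : ∀ s s' : SV k, aug (gen0 s s') = s * s'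
  aug_gr : ∀ (n : ℕ) (x : D), x ∈ gr (n + 1) → aug x = 0

variable (A : Type u) [Ring A] [Algebra k A]

/-- The `k`-linear map `S ⊗ kG → A` sending `s ⊗ g ↦ ιS(s) ιG(g)`; requiring it to be
bijective expresses that `A = S(V) ⋊ G` is the skew group algebra. -/
def skewAssembly (ιS : SV k →ₐ[k] A) (ιG : Gp p →* A) : (Gp p →₀ SV k) →ₗ[k] A :=
  Finsupp.lsum k fun g => (LinearMap.mulRight k (ιG g)) ∘ₗ ιS.toLinearMap

/-- The homogeneous component of total homological degree `n` of `X = C ⊗ D`. -/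
def Xdeg (grC : ℕ → Submodule k C) (grD : ℕ → Submodule k D) (n : ℕ) :
    Submodule k (C ⊗[k] D) :=
  ⨆ (q : ℕ × ℕ) (_ : q.1 + q.2 = n),
    Submodule.span k
      (Set.image2 (fun (c : C) (d : D) => c ⊗ₜ[k] d) (grC q.1 : Set C) (grD q.2 : Set D))

variable {p k C D A}

/-!
`λ` vanishes off `X_{1,1}` and on the `v`-direction, and on `[g] ⊗ w` it takes values in `k·ιG(G)`.
So in `λ φ_X (1 ⊗ λ ⊗ 1) Δ_X^{(2)}` applied to a generator of `X`, only the terms whose middle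
factor is `[g] ⊗ w` survive the inner `λ`; by the shape of `Δ_D` their right factor then lies in
`C ⊗ (1 ⊗ τ)` or `C ⊗ (v ⊗ τ)`. On such an element `X₁ ⊗ X₂`, the summand `φ_C ⊗ μ_D` of `φ_X`
lands in `D`-degree `0` or in the `v`-direction, where `λ` vanishes; the summand `ε_C μ_C ⊗ φ_D`
survives only as `C_1 ⊗ φ_D(γ ⊗ 1 ⊗ 1 ⊗ τ)`, and `φ_D(γ ⊗ 1 ⊗ 1 ⊗ τ)` is a boundary `d y`.
Finally `λ(c ⊗ d y) = 0` for `c ∈ C_1`, because `v` is `G`-invariant and therefore `ιS v`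
commutes with the values of `λ`.
-/

set_option linter.unusedSectionVars false

theorem TensorProduct.ext_of_span_eq_top {R M N P : Type*} [CommSemiring R]
    [AddCommMonoid M] [AddCommMonoid N] [AddCommMonoid P] [Module R M] [Module R N] [Module R P]
    {s : Set M} {t : Set N} (hs : Submodule.span R s = ⊤) (ht : Submodule.span R t = ⊤)
    {f g : M ⊗[R] N →ₗ[R] P} (h : ∀ m ∈ s, ∀ n ∈ t, f (m ⊗ₜ n) = g (m ⊗ₜ n)) : f = g :=
  TensorProduct.ext <| LinearMap.ext_on hs fun m hm => LinearMap.ext_on ht fun n hn => h m hm n hn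

lemma gg_pow_val (h : Gp p) : gg p ^ (Multiplicative.toAdd h).val = h := by
  have : NeZero p := ⟨(Fact.out : p.Prime).ne_zero⟩
  apply Multiplicative.toAdd.injective
  rw [toAdd_pow, gg, toAdd_ofAdd, nsmul_eq_mul, mul_one, ZMod.natCast_zmod_val]

lemma gg_induction {P : Gp p → Prop} (one : P 1) (mul : ∀ h, P h → P (gg p * h)) (h : Gp p) :
    P h := by
  rw [← gg_pow_val h]
  induction (Multiplicative.toAdd h).val with
  | zero => simpa using one
  | succ n ih => rw [pow_succ']; exact mul _ ih

def chi (h : Gp p) : k := ZMod.castHom (dvd_refl p) k (Multiplicative.toAdd h)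

lemma chi_one : (chi (1 : Gp p) : k) = 0 := by
  simp [chi]

lemma chi_gg_mul (h : Gp p) : (chi (gg p * h) : k) = 1 + chi h := by
  simp [chi, gg]

lemma smul_eq_self_of_gg {M : Type*} [MulAction (Gp p) M] {x : M} (hx : gg p • x = x)
    (h : Gp p) : h • x = x := by
  induction h using gg_induction with
  | one => exact one_smul _ x
  | mul h ih => rw [mul_smul, ih, hx]

lemma smul_apply₂_of_gg {M : Type*} [MulAction (Gp p) M] {f : SV k → SV k → M}
    (hf : ∀ s s', gg p • f s s' = f (gg p • s) (gg p • s')) (h : Gp p) (s s' : SV k) :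
    h • f s s' = f (h • s) (h • s') := by
  induction h using gg_induction generalizing s s' with
  | one => simp
  | mul h ih => rw [mul_smul, ih, hf, mul_smul, mul_smul]

section TensorOver

variable {R : Type u} [Ring R] {M N : Type u}
  [AddCommGroup M] [Module k M] [Module Rᵐᵒᵖ M] [AddCommGroup N] [Module k N] [Module R N]

lemma omk_zero_left (n : N) : omk k R (0 : M) n = 0 := by
  simp [omk]

lemma omk_zero_right (m : M) : omk k R m (0 : N) = 0 := by
  simp [omk]

lemma omk_smul_right (c : k) (m : M) (n : N) : omk k R m (c • n) = c • omk k R m n := by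
  rw [omk, TensorProduct.tmul_smul, Submodule.Quotient.mk_smul]

end TensorOver

lemma tmul_mem_Xdeg {grC : ℕ → Submodule k C} {grD : ℕ → Submodule k D} {c : C} {d : D}
    {n m : ℕ} (hc : c ∈ grC n) (hd : d ∈ grD m) : c ⊗ₜ[k] d ∈ Xdeg k C D grC grD (n + m) :=
  Submodule.mem_iSup_of_mem (n, m) <| Submodule.mem_iSup_of_mem rfl <|
    Submodule.subset_span ⟨c, hc, d, hd, rfl⟩

-- `RC.gen 1 (bar1 g)` is the bar generator `1 ⊗ [g] ⊗ 1` of `C_1`.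
def bar1 (g : Gp p) : ℕ → Gp p := fun t => if t = 1 then g else 1

lemma prod_bar1 (g : Gp p) : ∏ t ∈ Finset.range (1 + 2), bar1 g t = g := by
  simp [bar1]

lemma RedBarC.span_gen (RC : RedBarC p k C) :
    Submodule.span k {x | ∃ n a, x = RC.gen n a} = ⊤ := by
  rw [eq_top_iff, ← RC.internal.submodule_iSup_eq_top, iSup_le_iff]
  exact fun n => (RC.gen_span n).trans (Submodule.span_mono fun x ⟨a, ha⟩ => ⟨n, a, ha⟩)

namespace KoszulD

variable (RD : KoszulD p k D)

lemma gp_smul_gen0 (h : Gp p) (s s' : SV k) : h • RD.gen0 s s' = RD.gen0 (h • s) (h • s') :=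
  smul_apply₂_of_gg RD.gact_gen0 h s s'

lemma gp_smul_gen1v (h : Gp p) (s s' : SV k) : h • RD.gen1v s s' = RD.gen1v (h • s) (h • s') :=
  smul_apply₂_of_gg RD.gact_gen1v h s s'

lemma gp_smul_gen2 (h : Gp p) (s s' : SV k) : h • RD.gen2 s s' = RD.gen2 (h • s) (h • s') :=
  smul_apply₂_of_gg RD.gact_gen2 h s s'

lemma gp_smul_gen1w (h : Gp p) (s s' : SV k) :
    h • RD.gen1w s s' = (chi h : k) • RD.gen1v (h • s) (h • s') + RD.gen1w (h • s) (h • s') := by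
  induction h using gg_induction generalizing s s' with
  | one => simp [chi_one]
  | mul h ih =>
    rw [mul_smul, ih, smul_add, smul_comm, gp_smul_gen1v, RD.gact_gen1w, chi_gg_mul, add_smul,
      one_smul, mul_smul, mul_smul]
    abel

lemma gen1v_eq_smul (s s' : SV k) : RD.gen1v s s' = s • op s' • RD.gen1v 1 1 := by
  rw [RD.smul_op_gen1v, RD.smul_gen1v, mul_one, one_mul]

lemma gen1w_eq_smul (s s' : SV k) : RD.gen1w s s' = s • op s' • RD.gen1w 1 1 := by
  rw [RD.smul_op_gen1w, RD.smul_gen1w, mul_one, one_mul]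

lemma span_gen : Submodule.span k {x | ∃ s s', x = RD.gen0 s s' ∨ x = RD.gen1v s s' ∨
    x = RD.gen1w s s' ∨ x = RD.gen2 s s'} = ⊤ := by
  rw [eq_top_iff, ← RD.internal.submodule_iSup_eq_top, iSup_le_iff]
  rintro (_ | _ | _ | n)
  · exact RD.span0.trans (Submodule.span_mono fun x ⟨s, s', hx⟩ => ⟨s, s', .inl hx⟩)
  · refine RD.span1.trans (Submodule.span_mono ?_)
    rintro x (⟨s, s', hx⟩ | ⟨s, s', hx⟩)
    exacts [⟨s, s', .inr (.inl hx)⟩, ⟨s, s', .inr (.inr (.inl hx))⟩]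
  · exact RD.span2.trans (Submodule.span_mono fun x ⟨s, s', hx⟩ => ⟨s, s', .inr (.inr (.inr hx))⟩)
  · exact (RD.gr_top n).le.trans bot_le

lemma smul_mem_gr (h : Gp p) {j : ℕ} {x : D} (hx : x ∈ RD.gr j) : h • x ∈ RD.gr j := by
  suffices RD.gr j ≤ (RD.gr j).comap (DistribSMul.toLinearMap k D h) from this hx
  match j with
  | 0 =>
    refine RD.span0.trans (Submodule.span_le.2 ?_)
    rintro _ ⟨s, s', rfl⟩
    exact Submodule.mem_comap.2 (by simpa [gp_smul_gen0] using RD.gen0_gr _ _)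
  | 1 =>
    refine RD.span1.trans (Submodule.span_le.2 ?_)
    rintro _ (⟨s, s', rfl⟩ | ⟨s, s', rfl⟩)
    · exact Submodule.mem_comap.2 (by simpa [gp_smul_gen1v] using RD.gen1v_gr _ _)
    · refine Submodule.mem_comap.2 ?_
      simpa [gp_smul_gen1w] using
        add_mem (Submodule.smul_mem _ (chi h) (RD.gen1v_gr _ _)) (RD.gen1w_gr (h • s) (h • s'))
  | 2 =>
    refine RD.span2.trans (Submodule.span_le.2 ?_)
    rintro _ ⟨s, s', rfl⟩
    exact Submodule.mem_comap.2 (by simpa [gp_smul_gen2] using RD.gen2_gr _ _)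
  | n + 3 => rw [RD.gr_top]; exact bot_le

/-- The left tensor factors of `Δ_D` have the shape `E ⊗ 1`, also after the twists by `τ^{±1}`;
in degree `0` this is what `lam_tmul_phiD_gen0_gen0` needs. -/
def IsLeftFactor (j : ℕ) (E : D) : Prop :=
  E ∈ RD.gr j ∧ (j = 0 → ∃ γ, E = RD.gen0 γ 1)

variable {RD}

lemma IsLeftFactor.smul {j : ℕ} {E : D} (hE : RD.IsLeftFactor j E) (h : Gp p) :
    RD.IsLeftFactor j (h • E) := by
  refine ⟨RD.smul_mem_gr h hE.1, fun hj => ?_⟩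
  obtain ⟨γ, rfl⟩ := hE.2 hj
  exact ⟨h • γ, by rw [gp_smul_gen0, smul_one]⟩

variable (RD)

lemma isLeftFactor_gen0 (s : SV k) : RD.IsLeftFactor 0 (RD.gen0 s 1) :=
  ⟨RD.gen0_gr s 1, fun _ => ⟨s, rfl⟩⟩

lemma isLeftFactor_gen1v (s : SV k) : RD.IsLeftFactor 1 (RD.gen1v s 1) :=
  ⟨RD.gen1v_gr s 1, by simp⟩

lemma isLeftFactor_gen1w (s : SV k) : RD.IsLeftFactor 1 (RD.gen1w s 1) :=
  ⟨RD.gen1w_gr s 1, by simp⟩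

lemma isLeftFactor_gen2 (s : SV k) : RD.IsLeftFactor 2 (RD.gen2 s 1) :=
  ⟨RD.gen2_gr s 1, by simp⟩

end KoszulD

section

variable [Module A (C ⊗[k] D)] [Module Aᵐᵒᵖ (C ⊗[k] D)]

variable (p k C D A) in
structure BracketSetup where
  RC : RedBarC p k C
  RD : KoszulD p k D
  hgv : gg p • vv k = vv k
  ιS : SV k →ₐ[k] A
  ιG : Gp p →* A
  hcomm : ∀ (g : Gp p) (s : SV k), ιG g * ιS s = ιS (g • s) * ιG g
  hactL : ∀ (s' : SV k) (g' : Gp p) (n : ℕ) (a : ℕ → Gp p) (d : D),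
      (ιS s' * ιG g') • (RC.gen n a ⊗ₜ[k] d) =
        ((MonoidAlgebra.single g' (1 : k)) • RC.gen n a) ⊗ₜ[k]
          ((((g' * ∏ t ∈ Finset.range (n + 2), a t)⁻¹ : Gp p) • s') • d)
  hactR : ∀ (s : SV k) (g : Gp p) (c : C) (d : D),
      (op (ιS s * ιG g)) • (c ⊗ₜ[k] d) =
        (op (MonoidAlgebra.single g (1 : k)) • c) ⊗ₜ[k] ((g⁻¹ : Gp p) • (op s • d))
  lam : C ⊗[k] D →ₗ[k] A
  hlamL : ∀ (a : A) (x : C ⊗[k] D), lam (a • x) = a * lam x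
  hlamR : ∀ (c : Aᵐᵒᵖ) (x : C ⊗[k] D), lam (c • x) = lam x * c.unop
  hlam_supp : ∀ i j : ℕ, ¬(i = 1 ∧ j = 1) →
      ∀ c ∈ RC.gr i, ∀ d ∈ RD.gr j, lam (c ⊗ₜ[k] d) = 0
  hlam_v : ∀ i : ℕ, i ≤ p - 1 →
      lam (RC.gen 1 (fun t => if t = 1 then (gg p) ^ i else 1) ⊗ₜ[k] RD.gen1v 1 1) = 0
  hlam_w : ∀ i : ℕ, i ≤ p - 1 →
      lam (RC.gen 1 (fun t => if t = 1 then (gg p) ^ i else 1) ⊗ₜ[k] RD.gen1w 1 1) =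
        (i : k) • ιG ((gg p) ^ (i - 1))
  dTDD : OverR k (SV k) D D →ₗ[k] OverR k (SV k) D D
  hdTDD : ∀ (j : ℕ) (d d' : D), d ∈ RD.gr j →
      dTDD (omk k (SV k) d d') =
        omk k (SV k) (RD.d d) d' + (-1 : k) ^ j • omk k (SV k) d (RD.d d')
  rmuC : OverR k (MonoidAlgebra k (Gp p)) C C →ₗ[k] C
  hrmuC : ∀ c c' : C, rmuC (omk k (MonoidAlgebra k (Gp p)) c c') = op (RC.aug c') • c
  lmuD : OverR k (SV k) D D →ₗ[k] D
  hlmuD : ∀ d d' : D, lmuD (omk k (SV k) d d') = RD.aug d • d'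
  rmuD : OverR k (SV k) D D →ₗ[k] D
  hrmuD : ∀ d d' : D, rmuD (omk k (SV k) d d') = op (RD.aug d') • d
  ΔC : C →ₗ[k] OverR k (MonoidAlgebra k (Gp p)) C C
  hΔC : ∀ (n : ℕ) (a : ℕ → Gp p),
      ΔC (RC.gen n a) = ∑ j ∈ Finset.range (n + 1),
        omk k (MonoidAlgebra k (Gp p)) (RC.gen j (fun t => if t ≤ j then a t else 1))
          (RC.gen (n - j) (fun t => if t = 0 then 1 else a (t + j)))
  ΔD : D →ₗ[k] OverR k (SV k) D D
  hΔD0 : ∀ s s' : SV k, ΔD (RD.gen0 s s') =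
      omk k (SV k) (RD.gen0 s 1) (RD.gen0 1 s')
  hΔD1v : ∀ s s' : SV k, ΔD (RD.gen1v s s') =
      omk k (SV k) (RD.gen0 s 1) (RD.gen1v 1 s') +
      omk k (SV k) (RD.gen1v s 1) (RD.gen0 1 s')
  hΔD1w : ∀ s s' : SV k, ΔD (RD.gen1w s s') =
      omk k (SV k) (RD.gen0 s 1) (RD.gen1w 1 s') +
      omk k (SV k) (RD.gen1w s 1) (RD.gen0 1 s')
  hΔD2 : ∀ s s' : SV k, ΔD (RD.gen2 s s') =
      omk k (SV k) (RD.gen0 s 1) (RD.gen2 1 s') +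
      omk k (SV k) (RD.gen1v s 1) (RD.gen1w 1 s') -
      omk k (SV k) (RD.gen1w s 1) (RD.gen1v 1 s') +
      omk k (SV k) (RD.gen2 s 1) (RD.gen0 1 s')
  Θ : (OverR k (MonoidAlgebra k (Gp p)) C C) ⊗[k] (OverR k (SV k) D D) →ₗ[k]
      OverR k A (C ⊗[k] D) (C ⊗[k] D)
  hΘ : ∀ (i i' j : ℕ) (x x' : ℕ → Gp p) (d d' : D), d ∈ RD.gr j →
      Θ ((omk k (MonoidAlgebra k (Gp p)) (RC.gen i x) (RC.gen i' x')) ⊗ₜ[k]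
          (omk k (SV k) d d')) =
        (-1 : k) ^ (i' * j) •
          omk k A (RC.gen i x ⊗ₜ[k] ((∏ t ∈ Finset.range (i' + 2), x' t) • d))
            (RC.gen i' x' ⊗ₜ[k] d')
  tauInvQ : OverR k A (C ⊗[k] D) (C ⊗[k] D) →ₗ[k]
      (OverR k (MonoidAlgebra k (Gp p)) C C) ⊗[k] (OverR k (SV k) D D)
  htauInvQ : ∀ (i i' j : ℕ) (x x' : ℕ → Gp p) (d d' : D), d ∈ RD.gr j →
      tauInvQ (omk k A (RC.gen i x ⊗ₜ[k] d) (RC.gen i' x' ⊗ₜ[k] d')) =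
        (-1 : k) ^ (i' * j) •
          ((omk k (MonoidAlgebra k (Gp p)) (RC.gen i x) (RC.gen i' x')) ⊗ₜ[k]
            (omk k (SV k) (((∏ t ∈ Finset.range (i' + 2), x' t)⁻¹ : Gp p) • d) d'))
  φC : OverR k (MonoidAlgebra k (Gp p)) C C →ₗ[k] C
  hφC : ∀ (i j : ℕ) (x y : ℕ → Gp p),
      φC (omk k (MonoidAlgebra k (Gp p)) (RC.gen i x) (RC.gen j y)) = (-1 : k) ^ i •
        RC.gen (i + j + 1) (fun t =>
          if t ≤ i then x t
          else if t = i + 1 then x (i + 1) * y 0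
          else y (t - i - 1))
  φD : OverR k (SV k) D D →ₗ[k] D
  hφD_gr : ∀ (i j : ℕ) (x y : D), x ∈ RD.gr i → y ∈ RD.gr j →
      φD (omk k (SV k) x y) ∈ RD.gr (i + j + 1)
  hφD : RD.d ∘ₗ φD + φD ∘ₗ dTDD = lmuD - rmuD
  ot2X : (C ⊗[k] D) →ₗ[k]
      OverR k A (C ⊗[k] D) (C ⊗[k] D) →ₗ[k] Over3 k A (C ⊗[k] D)
  hot2X : ∀ x y z : C ⊗[k] D, ot2X x (omk k A y z) = omk3 k A x y z
  ΔRX : OverR k A (C ⊗[k] D) (C ⊗[k] D) →ₗ[k] Over3 k A (C ⊗[k] D)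
  hΔRX : ∀ x y : C ⊗[k] D,
      ΔRX (omk k A x y) = ot2X x ((Θ ∘ₗ TensorProduct.map ΔC ΔD) y)
  Tlam : Over3 k A (C ⊗[k] D) →ₗ[k] OverR k A (C ⊗[k] D) (C ⊗[k] D)
  hTlam : ∀ (i : ℕ) (x y z : C ⊗[k] D), x ∈ Xdeg k C D RC.gr RD.gr i →
      Tlam (omk3 k A x y z) =
        (-1 : k) ^ (i * 2) • omk k A x (lam y • z)

namespace BracketSetup

variable (H : BracketSetup p k C D A)

def phiX : OverR k A (C ⊗[k] D) (C ⊗[k] D) →ₗ[k] C ⊗[k] D :=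
  (TensorProduct.map H.φC H.lmuD + TensorProduct.map (H.RC.eps ∘ₗ H.rmuC) H.φD) ∘ₗ H.tauInvQ

def diagX : C ⊗[k] D →ₗ[k] OverR k A (C ⊗[k] D) (C ⊗[k] D) :=
  H.Θ ∘ₗ TensorProduct.map H.ΔC H.ΔD

-- `λ ∘_X λ = λ φ_X (1 ⊗ λ ⊗ 1) (1 ⊗ Δ_X) Δ_X`;
-- `lamPhiLam` is everything after the first `Δ_X`.
def lamPhiLam : OverR k A (C ⊗[k] D) (C ⊗[k] D) →ₗ[k] A :=
  H.lam ∘ₗ H.phiX ∘ₗ H.Tlam ∘ₗ H.ΔRX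

def lamCircLam : C ⊗[k] D →ₗ[k] A :=
  H.lamPhiLam ∘ₗ H.diagX

lemma ιG_smul_gen_tmul (g : Gp p) (n : ℕ) (a : ℕ → Gp p) (d : D) :
    H.ιG g • (H.RC.gen n a ⊗ₜ[k] d) = H.RC.gen n (Function.update a 0 (g * a 0)) ⊗ₜ[k] d := by
  simpa [H.RC.smul_gen] using H.hactL 1 g n a d

lemma lam_gen_update_zero (g : Gp p) (n : ℕ) (a : ℕ → Gp p) (d : D) :
    H.lam (H.RC.gen n (Function.update a 0 (g * a 0)) ⊗ₜ[k] d) =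
      H.ιG g * H.lam (H.RC.gen n a ⊗ₜ[k] d) := by
  rw [← H.ιG_smul_gen_tmul, H.hlamL]

lemma lam_gen_update_last (g : Gp p) (n : ℕ) (a : ℕ → Gp p) (d : D) :
    H.lam (H.RC.gen n (Function.update a (n + 1) (a (n + 1) * g)) ⊗ₜ[k] d) =
      H.lam (H.RC.gen n a ⊗ₜ[k] (g • d)) * H.ιG g := by
  have := H.hactR 1 g (H.RC.gen n a) (g • d)
  rw [map_one, one_mul, op_one, one_smul, inv_smul_smul, H.RC.smul_op_gen] at this
  rw [← this, H.hlamR, unop_op]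

lemma lam_gen_tmul_smul (s : SV k) (n : ℕ) (a : ℕ → Gp p) (d : D) :
    H.lam (H.RC.gen n a ⊗ₜ[k] (s • d)) =
      H.ιS ((∏ t ∈ Finset.range (n + 2), a t) • s) * H.lam (H.RC.gen n a ⊗ₜ[k] d) := by
  have := H.hactL ((∏ t ∈ Finset.range (n + 2), a t) • s) 1 n a d
  rw [map_one, mul_one, one_mul, inv_smul_smul, ← MonoidAlgebra.one_def, one_smul] at this
  rw [← H.hlamL, this]

lemma lam_tmul_op_smul (c : C) (s : SV k) (d : D) :
    H.lam (c ⊗ₜ[k] (op s • d)) = H.lam (c ⊗ₜ[k] d) * H.ιS s := by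
  have := H.hactR s 1 c d
  rw [map_one, mul_one, ← MonoidAlgebra.one_def, op_one, one_smul, inv_one, one_smul] at this
  rw [← this, H.hlamR, unop_op]

lemma lam_gen1_tmul (b : ℕ → Gp p) (d : D) :
    H.lam (H.RC.gen 1 b ⊗ₜ[k] d) =
      H.ιG (b 0) * H.lam (H.RC.gen 1 (bar1 (b 1)) ⊗ₜ[k] (b 2 • d)) * H.ιG (b 2) := by
  set b' := Function.update (bar1 (b 1)) 0 (b 0 * bar1 (b 1) 0)
  have hb : H.RC.gen 1 b = H.RC.gen 1 (Function.update b' 2 (b' 2 * b 2)) :=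
    H.RC.gen_congr _ _ _ fun t ht => by interval_cases t <;> simp [b', bar1]
  rw [hb, H.lam_gen_update_last, H.lam_gen_update_zero]

lemma lam_bar1_gen1v_one (g : Gp p) :
    H.lam (H.RC.gen 1 (bar1 g) ⊗ₜ[k] H.RD.gen1v 1 1) = 0 := by
  have := H.hlam_v _ (Nat.le_pred_of_lt (ZMod.val_lt (Multiplicative.toAdd g)))
  rwa [gg_pow_val] at this

lemma lam_bar1_gen1w_one (g : Gp p) :
    H.lam (H.RC.gen 1 (bar1 g) ⊗ₜ[k] H.RD.gen1w 1 1) =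
      ((Multiplicative.toAdd g).val : k) • H.ιG (gg p ^ ((Multiplicative.toAdd g).val - 1)) := by
  have := H.hlam_w _ (Nat.le_pred_of_lt (ZMod.val_lt (Multiplicative.toAdd g)))
  rwa [gg_pow_val] at this

lemma lam_gen1_gen1v (b : ℕ → Gp p) (s s' : SV k) :
    H.lam (H.RC.gen 1 b ⊗ₜ[k] H.RD.gen1v s s') = 0 := by
  rw [H.lam_gen1_tmul, H.RD.gp_smul_gen1v, H.RD.gen1v_eq_smul, H.lam_gen_tmul_smul,
    H.lam_tmul_op_smul, H.lam_bar1_gen1v_one]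
  simp

lemma lam_gen1_gen1w (b : ℕ → Gp p) (s s' : SV k) :
    H.lam (H.RC.gen 1 b ⊗ₜ[k] H.RD.gen1w s s') =
      H.ιG (b 0) * (H.ιS (b 1 • b 2 • s) *
        (H.lam (H.RC.gen 1 (bar1 (b 1)) ⊗ₜ[k] H.RD.gen1w 1 1) * H.ιS (b 2 • s'))) *
          H.ιG (b 2) := by
  rw [H.lam_gen1_tmul, H.RD.gp_smul_gen1w, TensorProduct.tmul_add, TensorProduct.tmul_smul,
    map_add, map_smul, H.lam_gen1_gen1v, smul_zero, zero_add, H.RD.gen1w_eq_smul,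
    H.lam_gen_tmul_smul, H.lam_tmul_op_smul, prod_bar1]

lemma lam_gen_gen1v (n : ℕ) (a : ℕ → Gp p) (s s' : SV k) :
    H.lam (H.RC.gen n a ⊗ₜ[k] H.RD.gen1v s s') = 0 := by
  rcases eq_or_ne n 1 with rfl | hn
  · exact H.lam_gen1_gen1v a s s'
  · exact H.hlam_supp n 1 (fun h => hn h.1) _ (H.RC.gen_gr n a) _ (H.RD.gen1v_gr s s')

lemma commute_ιS_vv_ιG (h : Gp p) : Commute (H.ιS (vv k)) (H.ιG h) :=
  ((H.hcomm h (vv k)).trans (by rw [smul_eq_self_of_gg H.hgv])).symm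

-- As `ᵍv = v`, `ιS v` commutes with the values of `λ`,
-- so the two `w`-terms of `d (α ⊗ v∧w ⊗ β)` cancel.
lemma lam_gen1_d_gen2 (b : ℕ → Gp p) (α β : SV k) :
    H.lam (H.RC.gen 1 b ⊗ₜ[k] H.RD.d (H.RD.gen2 α β)) = 0 := by
  have hW : Commute (H.ιS (vv k)) (H.lam (H.RC.gen 1 (bar1 (b 1)) ⊗ₜ[k] H.RD.gen1w 1 1)) := by
    rw [H.lam_bar1_gen1w_one]
    exact (H.commute_ιS_vv_ιG _).smul_right _
  rw [H.RD.d_gen2]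
  simp only [TensorProduct.tmul_sub, TensorProduct.tmul_add, map_sub, map_add, H.lam_gen1_gen1v,
    sub_zero, add_zero, sub_eq_zero]
  rw [H.lam_gen1_gen1w b, H.lam_gen1_gen1w b]
  simp only [smul_mul', smul_eq_self_of_gg H.hgv, map_mul, mul_assoc, hW.left_comm]

lemma lam_gen_tmul_eq_zero_of_ne {n j : ℕ} (hj : j ≠ 1) (a : ℕ → Gp p) {d : D}
    (hd : d ∈ H.RD.gr j) : H.lam (H.RC.gen n a ⊗ₜ[k] d) = 0 :=
  H.hlam_supp n j (fun h => hj h.2) _ (H.RC.gen_gr n a) d hd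

lemma lam_tmul_d_eq_zero {c : C} (hc : c ∈ H.RC.gr 1) {y : D} (hy : y ∈ H.RD.gr 2) :
    H.lam (c ⊗ₜ[k] H.RD.d y) = 0 := by
  let B : C →ₗ[k] D →ₗ[k] A := ((TensorProduct.mk k C D).compl₂ H.RD.d).compr₂ H.lam
  have hB : Submodule.map₂ B (Submodule.span k {x | ∃ b, x = H.RC.gen 1 b})
      (Submodule.span k {x | ∃ α β, x = H.RD.gen2 α β}) ≤ ⊥ := by
    rw [Submodule.map₂_span_span, Submodule.span_le]
    rintro _ ⟨_, ⟨b, rfl⟩, _, ⟨α, β, rfl⟩, rfl⟩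
    exact H.lam_gen1_d_gen2 b α β
  exact (Submodule.mem_bot k).1
    (hB (Submodule.apply_mem_map₂ B (H.RC.gen_span 1 hc) (H.RD.span2 hy)))

lemma d_phiD (ξ : OverR k (SV k) D D) :
    H.RD.d (H.φD ξ) = H.lmuD ξ - H.rmuD ξ - H.φD (H.dTDD ξ) := by
  have := LinearMap.congr_fun H.hφD ξ
  simp only [LinearMap.add_apply, LinearMap.comp_apply, LinearMap.sub_apply] at this
  exact eq_sub_of_add_eq this

lemma d_phiD_gen0_gen0 (γ β : SV k) :
    H.RD.d (H.φD (omk k (SV k) (H.RD.gen0 γ 1) (H.RD.gen0 1 β))) = 0 := by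
  rw [H.d_phiD, H.hdTDD 0 _ _ (H.RD.gen0_gr γ 1), H.RD.d_gen0, H.RD.d_gen0, omk_zero_left,
    omk_zero_right, H.hlmuD, H.hrmuD, H.RD.aug_gen0, H.RD.aug_gen0, H.RD.smul_gen0,
    H.RD.smul_op_gen0]
  simp

lemma eq_neg_d_phiD_of_d_eq_zero {x : D} (hx : x ∈ H.RD.gr 1) (hdx : H.RD.d x = 0) :
    x = -H.RD.d (H.φD (omk k (SV k) x (H.RD.gen0 1 1))) := by
  rw [H.d_phiD, H.hdTDD 1 _ _ hx, hdx, H.RD.d_gen0, omk_zero_left, omk_zero_right, H.hlmuD,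
    H.hrmuD, H.RD.aug_gr 0 x hx, H.RD.aug_gen0]
  simp

-- `φ_D(γ ⊗ 1 ⊗ 1 ⊗ β)` is a cycle of degree one, hence a boundary, and `λ` kills boundaries.
lemma lam_tmul_phiD_gen0_gen0 {c : C} (hc : c ∈ H.RC.gr 1) (γ β : SV k) :
    H.lam (c ⊗ₜ[k] H.φD (omk k (SV k) (H.RD.gen0 γ 1) (H.RD.gen0 1 β))) = 0 := by
  have hx := H.hφD_gr 0 0 _ _ (H.RD.gen0_gr γ 1) (H.RD.gen0_gr 1 β)
  rw [H.eq_neg_d_phiD_of_d_eq_zero hx (H.d_phiD_gen0_gen0 γ β), TensorProduct.tmul_neg, map_neg,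
    H.lam_tmul_d_eq_zero hc (H.hφD_gr 1 0 _ _ hx (H.RD.gen0_gr 1 1)), neg_zero]

lemma eps_rmuC_mem (i : ℕ) (x : ℕ → Gp p) (m : ℕ) (c : ℕ → Gp p) :
    H.RC.eps (H.rmuC (omk k _ (H.RC.gen i x) (H.RC.gen m c))) ∈ H.RC.gr i := by
  rw [H.hrmuC]
  cases m with
  | zero =>
    rw [H.RC.aug_gen, H.RC.smul_op_gen, H.RC.eps_gen]
    exact Submodule.smul_mem _ _ (H.RC.gen_gr _ _)
  | succ m =>
    rw [H.RC.aug_gr m _ (H.RC.gen_gr _ _), op_zero, zero_smul, map_zero]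
    exact zero_mem _

lemma lam_phiC_tmul_lmuD (i : ℕ) (x : ℕ → Gp p) (m : ℕ) (c : ℕ → Gp p) (E : D) {F : D}
    {τ : SV k} (hF : F = H.RD.gen0 1 τ ∨ F = H.RD.gen1v 1 τ) :
    H.lam (H.φC (omk k _ (H.RC.gen i x) (H.RC.gen m c)) ⊗ₜ[k] H.lmuD (omk k (SV k) E F)) = 0 := by
  rw [H.hφC, H.hlmuD, ← TensorProduct.smul_tmul', map_smul]
  rcases hF with rfl | rfl
  · rw [H.RD.smul_gen0, H.lam_gen_tmul_eq_zero_of_ne zero_ne_one _ (H.RD.gen0_gr _ _), smul_zero]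
  · rw [H.RD.smul_gen1v, H.lam_gen_gen1v, smul_zero]

lemma lam_eps_rmuC_tmul_phiD {j : ℕ} {E : D} (hE : H.RD.IsLeftFactor j E) {F : D} {τ : SV k}
    (hF : F = H.RD.gen0 1 τ ∨ F = H.RD.gen1v 1 τ) (i : ℕ) (x : ℕ → Gp p) (m : ℕ)
    (c : ℕ → Gp p) :
    H.lam (H.RC.eps (H.rmuC (omk k _ (H.RC.gen i x) (H.RC.gen m c))) ⊗ₜ[k]
      H.φD (omk k (SV k) E F)) = 0 := by
  have hc := H.eps_rmuC_mem i x m c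
  rcases hF with rfl | rfl
  · by_cases hij : i = 1 ∧ j = 0
    · obtain ⟨rfl, rfl⟩ := hij
      obtain ⟨γ, rfl⟩ := hE.2 rfl
      exact H.lam_tmul_phiD_gen0_gen0 hc γ τ
    · exact H.hlam_supp i (j + 0 + 1) (by omega) _ hc _ (H.hφD_gr j 0 _ _ hE.1 (H.RD.gen0_gr 1 τ))
  · exact H.hlam_supp i (j + 1 + 1) (by omega) _ hc _ (H.hφD_gr j 1 _ _ hE.1 (H.RD.gen1v_gr 1 τ))

lemma lam_phiX_eq_zero {j : ℕ} {E : D} (hE : H.RD.IsLeftFactor j E) {F : D} {τ : SV k}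
    (hF : F = H.RD.gen0 1 τ ∨ F = H.RD.gen1v 1 τ) (i : ℕ) (x : ℕ → Gp p) (m : ℕ)
    (c : ℕ → Gp p) :
    H.lam (H.phiX (omk k A (H.RC.gen i x ⊗ₜ[k] E) (H.RC.gen m c ⊗ₜ[k] F))) = 0 := by
  rw [phiX, LinearMap.comp_apply, H.htauInvQ i m j x c E F hE.1, map_smul, map_smul,
    LinearMap.add_apply, TensorProduct.map_tmul, TensorProduct.map_tmul, map_add,
    LinearMap.comp_apply, H.lam_phiC_tmul_lmuD _ _ _ _ _ hF,
    H.lam_eps_rmuC_tmul_phiD (hE.smul _) hF, add_zero, smul_zero]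

lemma lam_phiX_Tlam_omk3 {i : ℕ} {x : ℕ → Gp p} {j : ℕ} {E : D} (hE : E ∈ H.RD.gr j)
    (Y Z : C ⊗[k] D) :
    H.lam (H.phiX (H.Tlam (omk3 k A (H.RC.gen i x ⊗ₜ[k] E) Y Z))) =
      H.lam (H.phiX (omk k A (H.RC.gen i x ⊗ₜ[k] E) (H.lam Y • Z))) := by
  rw [H.hTlam _ _ _ _ (tmul_mem_Xdeg (H.RC.gen_gr i x) hE), pow_mul', neg_one_sq, one_pow,
    one_smul]

lemma lam_phiX_Tlam_of_lam_eq_zero {i : ℕ} {x : ℕ → Gp p} {j : ℕ} {E : D}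
    (hE : E ∈ H.RD.gr j) {Y : C ⊗[k] D} (hY : H.lam Y = 0) (Z : C ⊗[k] D) :
    H.lam (H.phiX (H.Tlam (omk3 k A (H.RC.gen i x ⊗ₜ[k] E) Y Z))) = 0 := by
  rw [H.lam_phiX_Tlam_omk3 hE, hY, zero_smul, omk_zero_right, map_zero, map_zero]

lemma exists_lam_gen_tmul_smul_gen1w (n : ℕ) (y : ℕ → Gp p) (h : Gp p) :
    ∃ (a : k) (g : Gp p), H.lam (H.RC.gen n y ⊗ₜ[k] (h • H.RD.gen1w 1 1)) = a • H.ιG g := by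
  rcases eq_or_ne n 1 with rfl | hn
  · rw [H.RD.gp_smul_gen1w, smul_one, TensorProduct.tmul_add, TensorProduct.tmul_smul, map_add,
      map_smul, H.lam_gen1_gen1v, smul_zero, zero_add, H.lam_gen1_gen1w, H.lam_bar1_gen1w_one]
    refine ⟨((Multiplicative.toAdd (y 1)).val : k),
      y 0 * gg p ^ ((Multiplicative.toAdd (y 1)).val - 1) * y 2, ?_⟩
    simp only [smul_one, map_one, one_mul, mul_one, smul_mul_assoc, mul_smul_comm, map_mul]
  · refine ⟨0, 1, ?_⟩
    rw [zero_smul]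
    exact H.hlam_supp n 1 (fun h => hn h.1) _ (H.RC.gen_gr n y) _
      (H.RD.smul_mem_gr h (H.RD.gen1w_gr 1 1))

variable [IsScalarTower k A (C ⊗[k] D)]

lemma lam_phiX_Tlam_smul_gen1w {j : ℕ} {E : D} (hE : H.RD.IsLeftFactor j E) {F : D} {τ : SV k}
    (hF : F = H.RD.gen0 1 τ ∨ F = H.RD.gen1v 1 τ) (i : ℕ) (x : ℕ → Gp p) (r : ℕ)
    (y : ℕ → Gp p) (h : Gp p) (m : ℕ) (c : ℕ → Gp p) :
    H.lam (H.phiX (H.Tlam (omk3 k A (H.RC.gen i x ⊗ₜ[k] E)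
      (H.RC.gen r y ⊗ₜ[k] (h • H.RD.gen1w 1 1)) (H.RC.gen m c ⊗ₜ[k] F)))) = 0 := by
  obtain ⟨a, g, hag⟩ := H.exists_lam_gen_tmul_smul_gen1w r y h
  rw [H.lam_phiX_Tlam_omk3 hE.1, hag, smul_assoc, H.ιG_smul_gen_tmul, omk_smul_right, map_smul,
    map_smul, H.lam_phiX_eq_zero hE hF, smul_zero]

lemma diagX_gen_tmul (n : ℕ) (a : ℕ → Gp p) (d : D) :
    H.diagX (H.RC.gen n a ⊗ₜ[k] d) = ∑ r ∈ Finset.range (n + 1),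
      H.Θ (omk k _ (H.RC.gen r (fun t => if t ≤ r then a t else 1))
        (H.RC.gen (n - r) (fun t => if t = 0 then 1 else a (t + r))) ⊗ₜ[k] H.ΔD d) := by
  rw [diagX, LinearMap.comp_apply, TensorProduct.map_tmul, H.hΔC, TensorProduct.sum_tmul, map_sum]

lemma lamPhiLam_omk (X Y : C ⊗[k] D) :
    H.lamPhiLam (omk k A X Y) = H.lam (H.phiX (H.Tlam (H.ot2X X (H.diagX Y)))) := by
  simp only [lamPhiLam, LinearMap.comp_apply, H.hΔRX]
  rfl

lemma lamPhiLam_gen0 {j : ℕ} {E : D} (hE : H.RD.IsLeftFactor j E) (i : ℕ) (x : ℕ → Gp p)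
    (n : ℕ) (a : ℕ → Gp p) (τ : SV k) :
    H.lamPhiLam (omk k A (H.RC.gen i x ⊗ₜ[k] E) (H.RC.gen n a ⊗ₜ[k] H.RD.gen0 1 τ)) = 0 := by
  simp only [H.lamPhiLam_omk, H.diagX_gen_tmul, H.hΔD0, map_sum]
  refine Finset.sum_eq_zero fun r _ => ?_
  rw [H.hΘ _ _ 0 _ _ _ _ (H.RD.gen0_gr 1 1)]
  simp only [map_smul, H.hot2X, H.RD.gp_smul_gen0, smul_one]
  rw [H.lam_phiX_Tlam_of_lam_eq_zero hE.1
    (H.lam_gen_tmul_eq_zero_of_ne zero_ne_one _ (H.RD.gen0_gr 1 1)), smul_zero]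

lemma lamPhiLam_gen1v {j : ℕ} {E : D} (hE : H.RD.IsLeftFactor j E) (i : ℕ) (x : ℕ → Gp p)
    (n : ℕ) (a : ℕ → Gp p) (τ : SV k) :
    H.lamPhiLam (omk k A (H.RC.gen i x ⊗ₜ[k] E) (H.RC.gen n a ⊗ₜ[k] H.RD.gen1v 1 τ)) = 0 := by
  simp only [H.lamPhiLam_omk, H.diagX_gen_tmul, H.hΔD1v, TensorProduct.tmul_add, map_add, map_sum]
  refine Finset.sum_eq_zero fun r _ => ?_
  rw [H.hΘ _ _ 0 _ _ _ _ (H.RD.gen0_gr 1 1), H.hΘ _ _ 1 _ _ _ _ (H.RD.gen1v_gr 1 1)]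
  simp only [map_smul, H.hot2X, H.RD.gp_smul_gen0, H.RD.gp_smul_gen1v, smul_one]
  rw [H.lam_phiX_Tlam_of_lam_eq_zero hE.1
      (H.lam_gen_tmul_eq_zero_of_ne zero_ne_one _ (H.RD.gen0_gr 1 1)),
    H.lam_phiX_Tlam_of_lam_eq_zero hE.1 (H.lam_gen_gen1v _ _ 1 1)]
  simp

lemma lamPhiLam_gen1w {j : ℕ} {E : D} (hE : H.RD.IsLeftFactor j E) (i : ℕ) (x : ℕ → Gp p)
    (n : ℕ) (a : ℕ → Gp p) (τ : SV k) :
    H.lamPhiLam (omk k A (H.RC.gen i x ⊗ₜ[k] E) (H.RC.gen n a ⊗ₜ[k] H.RD.gen1w 1 τ)) = 0 := by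
  simp only [H.lamPhiLam_omk, H.diagX_gen_tmul, H.hΔD1w, TensorProduct.tmul_add, map_add, map_sum]
  refine Finset.sum_eq_zero fun r _ => ?_
  rw [H.hΘ _ _ 0 _ _ _ _ (H.RD.gen0_gr 1 1), H.hΘ _ _ 1 _ _ _ _ (H.RD.gen1w_gr 1 1)]
  simp only [map_smul, H.hot2X, H.RD.gp_smul_gen0, smul_one]
  rw [H.lam_phiX_Tlam_of_lam_eq_zero hE.1
      (H.lam_gen_tmul_eq_zero_of_ne zero_ne_one _ (H.RD.gen0_gr 1 1)),
    H.lam_phiX_Tlam_smul_gen1w hE (.inl rfl)]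
  simp

lemma lamPhiLam_gen2 {j : ℕ} {E : D} (hE : H.RD.IsLeftFactor j E) (i : ℕ) (x : ℕ → Gp p)
    (n : ℕ) (a : ℕ → Gp p) (τ : SV k) :
    H.lamPhiLam (omk k A (H.RC.gen i x ⊗ₜ[k] E) (H.RC.gen n a ⊗ₜ[k] H.RD.gen2 1 τ)) = 0 := by
  simp only [H.lamPhiLam_omk, H.diagX_gen_tmul, H.hΔD2, TensorProduct.tmul_add,
    TensorProduct.tmul_sub, map_add, map_sub, map_sum]
  refine Finset.sum_eq_zero fun r _ => ?_
  rw [H.hΘ _ _ 0 _ _ _ _ (H.RD.gen0_gr 1 1), H.hΘ _ _ 1 _ _ _ _ (H.RD.gen1v_gr 1 1),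
    H.hΘ _ _ 1 _ _ _ _ (H.RD.gen1w_gr 1 1), H.hΘ _ _ 2 _ _ _ _ (H.RD.gen2_gr 1 1)]
  simp only [map_smul, H.hot2X, H.RD.gp_smul_gen0, H.RD.gp_smul_gen1v, H.RD.gp_smul_gen2,
    smul_one]
  rw [H.lam_phiX_Tlam_of_lam_eq_zero hE.1
      (H.lam_gen_tmul_eq_zero_of_ne zero_ne_one _ (H.RD.gen0_gr 1 1)),
    H.lam_phiX_Tlam_of_lam_eq_zero hE.1 (H.lam_gen_gen1v _ _ 1 1),
    H.lam_phiX_Tlam_smul_gen1w hE (.inr rfl),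
    H.lam_phiX_Tlam_of_lam_eq_zero hE.1
      (H.lam_gen_tmul_eq_zero_of_ne (by decide) _ (H.RD.gen2_gr 1 1))]
  simp

lemma lamCircLam_gen0 (n : ℕ) (a : ℕ → Gp p) (s s' : SV k) :
    H.lamCircLam (H.RC.gen n a ⊗ₜ[k] H.RD.gen0 s s') = 0 := by
  simp only [lamCircLam, LinearMap.comp_apply, H.diagX_gen_tmul, H.hΔD0, map_sum]
  refine Finset.sum_eq_zero fun r _ => ?_
  rw [H.hΘ _ _ 0 _ _ _ _ (H.RD.gen0_gr s 1), map_smul,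
    H.lamPhiLam_gen0 ((H.RD.isLeftFactor_gen0 s).smul _), smul_zero]

lemma lamCircLam_gen1v (n : ℕ) (a : ℕ → Gp p) (s s' : SV k) :
    H.lamCircLam (H.RC.gen n a ⊗ₜ[k] H.RD.gen1v s s') = 0 := by
  simp only [lamCircLam, LinearMap.comp_apply, H.diagX_gen_tmul, H.hΔD1v, TensorProduct.tmul_add,
    map_add, map_sum]
  refine Finset.sum_eq_zero fun r _ => ?_
  rw [H.hΘ _ _ 0 _ _ _ _ (H.RD.gen0_gr s 1), H.hΘ _ _ 1 _ _ _ _ (H.RD.gen1v_gr s 1), map_smul,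
    map_smul, H.lamPhiLam_gen1v ((H.RD.isLeftFactor_gen0 s).smul _),
    H.lamPhiLam_gen0 ((H.RD.isLeftFactor_gen1v s).smul _)]
  simp

lemma lamCircLam_gen1w (n : ℕ) (a : ℕ → Gp p) (s s' : SV k) :
    H.lamCircLam (H.RC.gen n a ⊗ₜ[k] H.RD.gen1w s s') = 0 := by
  simp only [lamCircLam, LinearMap.comp_apply, H.diagX_gen_tmul, H.hΔD1w, TensorProduct.tmul_add,
    map_add, map_sum]
  refine Finset.sum_eq_zero fun r _ => ?_
  rw [H.hΘ _ _ 0 _ _ _ _ (H.RD.gen0_gr s 1), H.hΘ _ _ 1 _ _ _ _ (H.RD.gen1w_gr s 1), map_smul,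
    map_smul, H.lamPhiLam_gen1w ((H.RD.isLeftFactor_gen0 s).smul _),
    H.lamPhiLam_gen0 ((H.RD.isLeftFactor_gen1w s).smul _)]
  simp

lemma lamCircLam_gen2 (n : ℕ) (a : ℕ → Gp p) (s s' : SV k) :
    H.lamCircLam (H.RC.gen n a ⊗ₜ[k] H.RD.gen2 s s') = 0 := by
  simp only [lamCircLam, LinearMap.comp_apply, H.diagX_gen_tmul, H.hΔD2, TensorProduct.tmul_add,
    TensorProduct.tmul_sub, map_add, map_sub, map_sum]
  refine Finset.sum_eq_zero fun r _ => ?_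
  rw [H.hΘ _ _ 0 _ _ _ _ (H.RD.gen0_gr s 1), H.hΘ _ _ 1 _ _ _ _ (H.RD.gen1v_gr s 1),
    H.hΘ _ _ 1 _ _ _ _ (H.RD.gen1w_gr s 1), H.hΘ _ _ 2 _ _ _ _ (H.RD.gen2_gr s 1)]
  simp only [map_smul]
  rw [H.lamPhiLam_gen2 ((H.RD.isLeftFactor_gen0 s).smul _),
    H.lamPhiLam_gen1w ((H.RD.isLeftFactor_gen1v s).smul _),
    H.lamPhiLam_gen1v ((H.RD.isLeftFactor_gen1w s).smul _),
    H.lamPhiLam_gen0 ((H.RD.isLeftFactor_gen2 s).smul _)]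
  simp

lemma lamCircLam_eq_zero : H.lamCircLam = 0 :=
  TensorProduct.ext_of_span_eq_top H.RC.span_gen H.RD.span_gen <| by
    rintro _ ⟨n, a, rfl⟩ _ ⟨s, s', rfl | rfl | rfl | rfl⟩
    exacts [H.lamCircLam_gen0 n a s s', H.lamCircLam_gen1v n a s s', H.lamCircLam_gen1w n a s s',
      H.lamCircLam_gen2 n a s s']

end BracketSetup

end

theorem bracket_lambda_lambda_general
    (RC : RedBarC p k C) (RD : KoszulD p k D)
    -- the action of `G` on `S(V) = k[v,w]`: `ᵍv = v`, `ᵍw = v + w`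
    (hgv : gg p • vv k = vv k)
    -- the skew group algebra `A = S(V) ⋊ G`
    (ιS : SV k →ₐ[k] A) (ιG : Gp p →* A)
    (hcomm : ∀ (g : Gp p) (s : SV k), ιG g * ιS s = ιS (g • s) * ιG g)
    -- the `A`-bimodule structure on `X = C ⊗ D` (twisted product resolution)
    [Module A (C ⊗[k] D)] [Module Aᵐᵒᵖ (C ⊗[k] D)]
    [IsScalarTower k A (C ⊗[k] D)]
    (hactL : ∀ (s' : SV k) (g' : Gp p) (n : ℕ) (a : ℕ → Gp p) (d : D),
      (ιS s' * ιG g') • (RC.gen n a ⊗ₜ[k] d) =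
        ((MonoidAlgebra.single g' (1 : k)) • RC.gen n a) ⊗ₜ[k]
          ((((g' * ∏ t ∈ Finset.range (n + 2), a t)⁻¹ : Gp p) • s') • d))
    (hactR : ∀ (s : SV k) (g : Gp p) (c : C) (d : D),
      (op (ιS s * ιG g)) • (c ⊗ₜ[k] d) =
        (op (MonoidAlgebra.single g (1 : k)) • c) ⊗ₜ[k] ((g⁻¹ : Gp p) • (op s • d)))
    -- the cochain `λ ∈ Hom_{A^e}(X_{1,1}, A)`:
    (lam : C ⊗[k] D →ₗ[k] A)
    (hlamL : ∀ (a : A) (x : C ⊗[k] D), lam (a • x) = a * lam x)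
    (hlamR : ∀ (c : Aᵐᵒᵖ) (x : C ⊗[k] D), lam (c • x) = lam x * c.unop)
    (hlam_supp : ∀ i j : ℕ, ¬(i = 1 ∧ j = 1) →
      ∀ c ∈ RC.gr i, ∀ d ∈ RD.gr j, lam (c ⊗ₜ[k] d) = 0)
    (hlam_v : ∀ i : ℕ, i ≤ p - 1 →
      lam (RC.gen 1 (fun t => if t = 1 then (gg p) ^ i else 1) ⊗ₜ[k] RD.gen1v 1 1) = 0)
    (hlam_w : ∀ i : ℕ, i ≤ p - 1 →
      lam (RC.gen 1 (fun t => if t = 1 then (gg p) ^ i else 1) ⊗ₜ[k] RD.gen1w 1 1) =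
        (i : k) • ιG ((gg p) ^ (i - 1)))
    -- the differential on `D ⊗_S D` and the counit maps for `C` and `D`
    (dTDD : OverR k (SV k) D D →ₗ[k] OverR k (SV k) D D)
    (hdTDD : ∀ (j : ℕ) (d d' : D), d ∈ RD.gr j →
      dTDD (omk k (SV k) d d') =
        omk k (SV k) (RD.d d) d' + (-1 : k) ^ j • omk k (SV k) d (RD.d d'))
    (rmuC : OverR k (MonoidAlgebra k (Gp p)) C C →ₗ[k] C)
    (hrmuC : ∀ c c' : C, rmuC (omk k (MonoidAlgebra k (Gp p)) c c') = op (RC.aug c') • c)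
    (lmuD : OverR k (SV k) D D →ₗ[k] D)
    (hlmuD : ∀ d d' : D, lmuD (omk k (SV k) d d') = RD.aug d • d')
    (rmuD : OverR k (SV k) D D →ₗ[k] D)
    (hrmuD : ∀ d d' : D, rmuD (omk k (SV k) d d') = op (RD.aug d') • d)
    -- the diagonal `Δ_C` of the reduced bar resolution
    (ΔC : C →ₗ[k] OverR k (MonoidAlgebra k (Gp p)) C C)
    (hΔC : ∀ (n : ℕ) (a : ℕ → Gp p),
      ΔC (RC.gen n a) = ∑ j ∈ Finset.range (n + 1),
        omk k (MonoidAlgebra k (Gp p)) (RC.gen j (fun t => if t ≤ j then a t else 1))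
          (RC.gen (n - j) (fun t => if t = 0 then 1 else a (t + j))))
    -- the Koszul diagonal `Δ_D` (obtained from embedding into the bar resolution)
    (ΔD : D →ₗ[k] OverR k (SV k) D D)
    (hΔD0 : ∀ s s' : SV k, ΔD (RD.gen0 s s') =
      omk k (SV k) (RD.gen0 s 1) (RD.gen0 1 s'))
    (hΔD1v : ∀ s s' : SV k, ΔD (RD.gen1v s s') =
      omk k (SV k) (RD.gen0 s 1) (RD.gen1v 1 s') +
      omk k (SV k) (RD.gen1v s 1) (RD.gen0 1 s'))
    (hΔD1w : ∀ s s' : SV k, ΔD (RD.gen1w s s') =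
      omk k (SV k) (RD.gen0 s 1) (RD.gen1w 1 s') +
      omk k (SV k) (RD.gen1w s 1) (RD.gen0 1 s'))
    (hΔD2 : ∀ s s' : SV k, ΔD (RD.gen2 s s') =
      omk k (SV k) (RD.gen0 s 1) (RD.gen2 1 s') +
      omk k (SV k) (RD.gen1v s 1) (RD.gen1w 1 s') -
      omk k (SV k) (RD.gen1w s 1) (RD.gen1v 1 s') +
      omk k (SV k) (RD.gen2 s 1) (RD.gen0 1 s'))
    -- the chain map `1 ⊗ τ ⊗ 1 : (C ⊗_{kG} C) ⊗ (D ⊗_S D) → X ⊗_A X`, where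
    -- `τ(c ⊗ d) = (−1)^{ij} (ᵍd) ⊗ c` for `c ∈ (C_i)_g`, `d ∈ D_j` (a generator
    -- `gen i' x'` of the reduced bar resolution has `G`-degree `∏ t, x' t`)
    (Θ : (OverR k (MonoidAlgebra k (Gp p)) C C) ⊗[k] (OverR k (SV k) D D) →ₗ[k]
      OverR k A (C ⊗[k] D) (C ⊗[k] D))
    (hΘ : ∀ (i i' j : ℕ) (x x' : ℕ → Gp p) (d d' : D), d ∈ RD.gr j →
      Θ ((omk k (MonoidAlgebra k (Gp p)) (RC.gen i x) (RC.gen i' x')) ⊗ₜ[k]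
          (omk k (SV k) d d')) =
        (-1 : k) ^ (i' * j) •
          omk k A (RC.gen i x ⊗ₜ[k] ((∏ t ∈ Finset.range (i' + 2), x' t) • d))
            (RC.gen i' x' ⊗ₜ[k] d'))
    -- the map `1 ⊗ τ⁻¹ ⊗ 1 : X ⊗_A X → (C ⊗_{kG} C) ⊗ (D ⊗_S D)`
    (tauInvQ : OverR k A (C ⊗[k] D) (C ⊗[k] D) →ₗ[k]
      (OverR k (MonoidAlgebra k (Gp p)) C C) ⊗[k] (OverR k (SV k) D D))
    (htauInvQ : ∀ (i i' j : ℕ) (x x' : ℕ → Gp p) (d d' : D), d ∈ RD.gr j →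
      tauInvQ (omk k A (RC.gen i x ⊗ₜ[k] d) (RC.gen i' x' ⊗ₜ[k] d')) =
        (-1 : k) ^ (i' * j) •
          ((omk k (MonoidAlgebra k (Gp p)) (RC.gen i x) (RC.gen i' x')) ⊗ₜ[k]
            (omk k (SV k) (((∏ t ∈ Finset.range (i' + 2), x' t)⁻¹ : Gp p) • d) d')))
    -- the bar-resolution homotopy `φ_C`
    (φC : OverR k (MonoidAlgebra k (Gp p)) C C →ₗ[k] C)
    (hφC : ∀ (i j : ℕ) (x y : ℕ → Gp p),
      φC (omk k (MonoidAlgebra k (Gp p)) (RC.gen i x) (RC.gen j y)) = (-1 : k) ^ i •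
        RC.gen (i + j + 1) (fun t =>
          if t ≤ i then x t
          else if t = i + 1 then x (i + 1) * y 0
          else y (t - i - 1)))
    -- the standard Koszul homotopy `φ_D` from `μ_D ⊗ 1` to `1 ⊗ μ_D`, with its
    -- values recorded in the paper
    (φD : OverR k (SV k) D D →ₗ[k] D)
    (hφD_gr : ∀ (i j : ℕ) (x y : D), x ∈ RD.gr i → y ∈ RD.gr j →
      φD (omk k (SV k) x y) ∈ RD.gr (i + j + 1))
    (hφD : RD.d ∘ₗ φD + φD ∘ₗ dTDD = lmuD - rmuD)
    -- the reassociation `X ⊗_A (X ⊗_A X) → X ⊗_A X ⊗_A X` and `1_X ⊗ Δ_X` (so that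
    -- `Δ_X^{(2)} = (1_X ⊗ Δ_X) Δ_X`, with `Δ_X = (1 ⊗ τ ⊗ 1)(Δ_C ⊗ Δ_D)`)
    (ot2X : (C ⊗[k] D) →ₗ[k]
      OverR k A (C ⊗[k] D) (C ⊗[k] D) →ₗ[k] Over3 k A (C ⊗[k] D))
    (hot2X : ∀ x y z : C ⊗[k] D, ot2X x (omk k A y z) = omk3 k A x y z)
    (ΔRX : OverR k A (C ⊗[k] D) (C ⊗[k] D) →ₗ[k] Over3 k A (C ⊗[k] D))
    (hΔRX : ∀ x y : C ⊗[k] D,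
      ΔRX (omk k A x y) = ot2X x ((Θ ∘ₗ TensorProduct.map ΔC ΔD) y))
    -- the map `1_X ⊗ λ ⊗ 1_X` (with its Koszul signs)
    (Tlam : Over3 k A (C ⊗[k] D) →ₗ[k] OverR k A (C ⊗[k] D) (C ⊗[k] D))
    (hTlam : ∀ (i : ℕ) (x y z : C ⊗[k] D), x ∈ Xdeg k C D RC.gr RD.gr i →
      Tlam (omk3 k A x y z) =
        (-1 : k) ^ (i * 2) • omk k A x (lam y • z))
 :
    (lam ∘ₗ ((TensorProduct.map φC lmuD + TensorProduct.map (RC.eps ∘ₗ rmuC) φD) ∘ₗ tauInvQ) ∘ₗ Tlam ∘ₗ (ΔRX ∘ₗ (Θ ∘ₗ TensorProduct.map ΔC ΔD))) = 0 ∧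
    (lam ∘ₗ ((TensorProduct.map φC lmuD + TensorProduct.map (RC.eps ∘ₗ rmuC) φD) ∘ₗ tauInvQ) ∘ₗ Tlam ∘ₗ (ΔRX ∘ₗ (Θ ∘ₗ TensorProduct.map ΔC ΔD))) + (lam ∘ₗ ((TensorProduct.map φC lmuD + TensorProduct.map (RC.eps ∘ₗ rmuC) φD) ∘ₗ tauInvQ) ∘ₗ Tlam ∘ₗ (ΔRX ∘ₗ (Θ ∘ₗ TensorProduct.map ΔC ΔD))) = 0 := by
  have h := BracketSetup.lamCircLam_eq_zero ⟨RC, RD, hgv, ιS, ιG, hcomm, hactL, hactR, lam, hlamL,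
    hlamR, hlam_supp, hlam_v, hlam_w, dTDD, hdTDD, rmuC, hrmuC, lmuD, hlmuD, rmuD, hrmuD, ΔC, hΔC,
    ΔD, hΔD0, hΔD1v, hΔD1w, hΔD2, Θ, hΘ, tauInvQ, htauInvQ, φC, hφC, φD, hφD_gr, hφD, ot2X, hot2X,
    ΔRX, hΔRX, Tlam, hTlam⟩
  exact ⟨h, (congrArg₂ (· + ·) h h).trans (add_zero 0)⟩

set_option maxHeartbeats 1000000 in
/-- In the transvection group example, the Gerstenhaber square
bracket of the 2-cocycle `λ` with itself vanishes at the cochain level, computed via the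
twisted product resolution: in particular `λ ∘_X λ = 0` on `X₃`, and hence
`[λ, λ] = λ ∘_X λ + λ ∘_X λ = 0`. -/
theorem bracket_lambda_lambda
    (RC : RedBarC p k C) (RD : KoszulD p k D)
    -- the action of `G` on `S(V) = k[v,w]`: `ᵍv = v`, `ᵍw = v + w`
    (hgv : gg p • vv k = vv k) (hgw : gg p • ww k = vv k + ww k)
    -- the skew group algebra `A = S(V) ⋊ G`
    (ιS : SV k →ₐ[k] A) (ιG : Gp p →* A)
    (hcomm : ∀ (g : Gp p) (s : SV k), ιG g * ιS s = ιS (g • s) * ιG g)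
    (hskew : Function.Bijective (skewAssembly p k A ιS ιG))
    -- the `A`-bimodule structure on `X = C ⊗ D` (twisted product resolution)
    [Module A (C ⊗[k] D)] [Module Aᵐᵒᵖ (C ⊗[k] D)]
    [IsScalarTower k A (C ⊗[k] D)] [IsScalarTower k Aᵐᵒᵖ (C ⊗[k] D)]
    [SMulCommClass A Aᵐᵒᵖ (C ⊗[k] D)]
    (hactL : ∀ (s' : SV k) (g' : Gp p) (n : ℕ) (a : ℕ → Gp p) (d : D),
      (ιS s' * ιG g') • (RC.gen n a ⊗ₜ[k] d) =
        ((MonoidAlgebra.single g' (1 : k)) • RC.gen n a) ⊗ₜ[k]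
          ((((g' * ∏ t ∈ Finset.range (n + 2), a t)⁻¹ : Gp p) • s') • d))
    (hactR : ∀ (s : SV k) (g : Gp p) (c : C) (d : D),
      (op (ιS s * ιG g)) • (c ⊗ₜ[k] d) =
        (op (MonoidAlgebra.single g (1 : k)) • c) ⊗ₜ[k] ((g⁻¹ : Gp p) • (op s • d)))
    -- the cochain `λ ∈ Hom_{A^e}(X_{1,1}, A)`:
    (lam : C ⊗[k] D →ₗ[k] A)
    (hlamL : ∀ (a : A) (x : C ⊗[k] D), lam (a • x) = a * lam x)
    (hlamR : ∀ (c : Aᵐᵒᵖ) (x : C ⊗[k] D), lam (c • x) = lam x * c.unop)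
    (hlam_supp : ∀ i j : ℕ, ¬(i = 1 ∧ j = 1) →
      ∀ c ∈ RC.gr i, ∀ d ∈ RD.gr j, lam (c ⊗ₜ[k] d) = 0)
    (hlam_v : ∀ i : ℕ, i ≤ p - 1 →
      lam (RC.gen 1 (fun t => if t = 1 then (gg p) ^ i else 1) ⊗ₜ[k] RD.gen1v 1 1) = 0)
    (hlam_w : ∀ i : ℕ, i ≤ p - 1 →
      lam (RC.gen 1 (fun t => if t = 1 then (gg p) ^ i else 1) ⊗ₜ[k] RD.gen1w 1 1) =
        (i : k) • ιG ((gg p) ^ (i - 1)))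
    -- the differential on `D ⊗_S D` and the counit maps for `C` and `D`
    (dTDD : OverR k (SV k) D D →ₗ[k] OverR k (SV k) D D)
    (hdTDD : ∀ (j : ℕ) (d d' : D), d ∈ RD.gr j →
      dTDD (omk k (SV k) d d') =
        omk k (SV k) (RD.d d) d' + (-1 : k) ^ j • omk k (SV k) d (RD.d d'))
    (rmuC : OverR k (MonoidAlgebra k (Gp p)) C C →ₗ[k] C)
    (hrmuC : ∀ c c' : C, rmuC (omk k (MonoidAlgebra k (Gp p)) c c') = op (RC.aug c') • c)
    (lmuD : OverR k (SV k) D D →ₗ[k] D)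
    (hlmuD : ∀ d d' : D, lmuD (omk k (SV k) d d') = RD.aug d • d')
    (rmuD : OverR k (SV k) D D →ₗ[k] D)
    (hrmuD : ∀ d d' : D, rmuD (omk k (SV k) d d') = op (RD.aug d') • d)
    -- the diagonal `Δ_C` of the reduced bar resolution
    (ΔC : C →ₗ[k] OverR k (MonoidAlgebra k (Gp p)) C C)
    (hΔC : ∀ (n : ℕ) (a : ℕ → Gp p),
      ΔC (RC.gen n a) = ∑ j ∈ Finset.range (n + 1),
        omk k (MonoidAlgebra k (Gp p)) (RC.gen j (fun t => if t ≤ j then a t else 1))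
          (RC.gen (n - j) (fun t => if t = 0 then 1 else a (t + j))))
    -- the Koszul diagonal `Δ_D` (obtained from embedding into the bar resolution)
    (ΔD : D →ₗ[k] OverR k (SV k) D D)
    (hΔD0 : ∀ s s' : SV k, ΔD (RD.gen0 s s') =
      omk k (SV k) (RD.gen0 s 1) (RD.gen0 1 s'))
    (hΔD1v : ∀ s s' : SV k, ΔD (RD.gen1v s s') =
      omk k (SV k) (RD.gen0 s 1) (RD.gen1v 1 s') +
      omk k (SV k) (RD.gen1v s 1) (RD.gen0 1 s'))
    (hΔD1w : ∀ s s' : SV k, ΔD (RD.gen1w s s') =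
      omk k (SV k) (RD.gen0 s 1) (RD.gen1w 1 s') +
      omk k (SV k) (RD.gen1w s 1) (RD.gen0 1 s'))
    (hΔD2 : ∀ s s' : SV k, ΔD (RD.gen2 s s') =
      omk k (SV k) (RD.gen0 s 1) (RD.gen2 1 s') +
      omk k (SV k) (RD.gen1v s 1) (RD.gen1w 1 s') -
      omk k (SV k) (RD.gen1w s 1) (RD.gen1v 1 s') +
      omk k (SV k) (RD.gen2 s 1) (RD.gen0 1 s'))
    -- the chain map `1 ⊗ τ ⊗ 1 : (C ⊗_{kG} C) ⊗ (D ⊗_S D) → X ⊗_A X`, where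
    -- `τ(c ⊗ d) = (−1)^{ij} (ᵍd) ⊗ c` for `c ∈ (C_i)_g`, `d ∈ D_j` (a generator
    -- `gen i' x'` of the reduced bar resolution has `G`-degree `∏ t, x' t`)
    (Θ : (OverR k (MonoidAlgebra k (Gp p)) C C) ⊗[k] (OverR k (SV k) D D) →ₗ[k]
      OverR k A (C ⊗[k] D) (C ⊗[k] D))
    (hΘ : ∀ (i i' j : ℕ) (x x' : ℕ → Gp p) (d d' : D), d ∈ RD.gr j →
      Θ ((omk k (MonoidAlgebra k (Gp p)) (RC.gen i x) (RC.gen i' x')) ⊗ₜ[k]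
          (omk k (SV k) d d')) =
        (-1 : k) ^ (i' * j) •
          omk k A (RC.gen i x ⊗ₜ[k] ((∏ t ∈ Finset.range (i' + 2), x' t) • d))
            (RC.gen i' x' ⊗ₜ[k] d'))
    -- the map `1 ⊗ τ⁻¹ ⊗ 1 : X ⊗_A X → (C ⊗_{kG} C) ⊗ (D ⊗_S D)`
    (tauInvQ : OverR k A (C ⊗[k] D) (C ⊗[k] D) →ₗ[k]
      (OverR k (MonoidAlgebra k (Gp p)) C C) ⊗[k] (OverR k (SV k) D D))
    (htauInvQ : ∀ (i i' j : ℕ) (x x' : ℕ → Gp p) (d d' : D), d ∈ RD.gr j →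
      tauInvQ (omk k A (RC.gen i x ⊗ₜ[k] d) (RC.gen i' x' ⊗ₜ[k] d')) =
        (-1 : k) ^ (i' * j) •
          ((omk k (MonoidAlgebra k (Gp p)) (RC.gen i x) (RC.gen i' x')) ⊗ₜ[k]
            (omk k (SV k) (((∏ t ∈ Finset.range (i' + 2), x' t)⁻¹ : Gp p) • d) d')))
    -- the bar-resolution homotopy `φ_C`
    (φC : OverR k (MonoidAlgebra k (Gp p)) C C →ₗ[k] C)
    (hφC : ∀ (i j : ℕ) (x y : ℕ → Gp p),
      φC (omk k (MonoidAlgebra k (Gp p)) (RC.gen i x) (RC.gen j y)) = (-1 : k) ^ i •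
        RC.gen (i + j + 1) (fun t =>
          if t ≤ i then x t
          else if t = i + 1 then x (i + 1) * y 0
          else y (t - i - 1)))
    -- the standard Koszul homotopy `φ_D` from `μ_D ⊗ 1` to `1 ⊗ μ_D`, with its
    -- values recorded in the paper
    (φD : OverR k (SV k) D D →ₗ[k] D)
    (hφD_gr : ∀ (i j : ℕ) (x y : D), x ∈ RD.gr i → y ∈ RD.gr j →
      φD (omk k (SV k) x y) ∈ RD.gr (i + j + 1))
    (hφD : RD.d ∘ₗ φD + φD ∘ₗ dTDD = lmuD - rmuD)
    (hφD₁ : φD (omk k (SV k) (RD.gen1w 1 1) (RD.gen0 (vv k) 1)) = RD.gen2 1 1)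
    (hφD₂ : φD (omk k (SV k) (RD.gen0 1 (vv k)) (RD.gen1w 1 1)) = 0)
    (hφD₃ : φD (omk k (SV k) (RD.gen0 1 1) (RD.gen1v 1 1)) = 0)
    (hφD₄ : φD (omk k (SV k) (RD.gen1v 1 1) (RD.gen0 1 1)) = 0)
    -- the reassociation `X ⊗_A (X ⊗_A X) → X ⊗_A X ⊗_A X` and `1_X ⊗ Δ_X` (so that
    -- `Δ_X^{(2)} = (1_X ⊗ Δ_X) Δ_X`, with `Δ_X = (1 ⊗ τ ⊗ 1)(Δ_C ⊗ Δ_D)`)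
    (ot2X : (C ⊗[k] D) →ₗ[k]
      OverR k A (C ⊗[k] D) (C ⊗[k] D) →ₗ[k] Over3 k A (C ⊗[k] D))
    (hot2X : ∀ x y z : C ⊗[k] D, ot2X x (omk k A y z) = omk3 k A x y z)
    (ΔRX : OverR k A (C ⊗[k] D) (C ⊗[k] D) →ₗ[k] Over3 k A (C ⊗[k] D))
    (hΔRX : ∀ x y : C ⊗[k] D,
      ΔRX (omk k A x y) = ot2X x ((Θ ∘ₗ TensorProduct.map ΔC ΔD) y))
    -- the map `1_X ⊗ λ ⊗ 1_X` (with its Koszul signs)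
    (Tlam : Over3 k A (C ⊗[k] D) →ₗ[k] OverR k A (C ⊗[k] D) (C ⊗[k] D))
    (hTlam : ∀ (i : ℕ) (x y z : C ⊗[k] D), x ∈ Xdeg k C D RC.gr RD.gr i →
      Tlam (omk3 k A x y z) =
        (-1 : k) ^ (i * 2) • omk k A x (lam y • z))
 :
    (lam ∘ₗ ((TensorProduct.map φC lmuD + TensorProduct.map (RC.eps ∘ₗ rmuC) φD) ∘ₗ tauInvQ) ∘ₗ Tlam ∘ₗ (ΔRX ∘ₗ (Θ ∘ₗ TensorProduct.map ΔC ΔD))) = 0 ∧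
    (lam ∘ₗ ((TensorProduct.map φC lmuD + TensorProduct.map (RC.eps ∘ₗ rmuC) φD) ∘ₗ tauInvQ) ∘ₗ Tlam ∘ₗ (ΔRX ∘ₗ (Θ ∘ₗ TensorProduct.map ΔC ΔD))) + (lam ∘ₗ ((TensorProduct.map φC lmuD + TensorProduct.map (RC.eps ∘ₗ rmuC) φD) ∘ₗ tauInvQ) ∘ₗ Tlam ∘ₗ (ΔRX ∘ₗ (Θ ∘ₗ TensorProduct.map ΔC ΔD))) = 0 :=
  bracket_lambda_lambda_general RC RD hgv ιS ιG hcomm hactL hactR lam hlamL hlamR hlam_supp hlam_v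
    hlam_w dTDD hdTDD rmuC hrmuC lmuD hlmuD rmuD hrmuD ΔC hΔC ΔD hΔD0 hΔD1v hΔD1w hΔD2 Θ hΘ tauInvQ
    htauInvQ φC hφC φD hφD_gr hφD ot2X hot2X ΔRX hΔRX Tlam hTlam

end
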